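/- arXiv:2412.16150 — 4 statements merged into one kernel-verified Lean document; each statement's English description precedes it below -/
import Mathlib

section
/- If a conjugacy class [x] in a finitely generated free group F grows polynomially of degree d under iteration of an outer automorphism φ, then for every n ≥ 1 it grows polynomially of degree d under iteration of φⁿ. -/
/-- The cyclically reduced word length of `x`: the minimal word length in the
conjugacy class of `x` (with respect to the standard basis of the free group). -/
noncomputable def cyclLength {α : Type*} [DecidableEq α] (x : FreeGroup α) : ℕ :=
  sInf ((fun y : FreeGroup α => y.toWord.length) '' {y | IsConj x y})

/-- The sequence `a` is bounded above by a polynomial of degree `d`. -/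
def PolyBounded (a : ℕ → ℕ) (d : ℕ) : Prop :=
  ∃ C : ℝ, ∀ k : ℕ, (a k : ℝ) ≤ C * (k + 1 : ℝ) ^ d

/-- The conjugacy class of `x` grows polynomially of degree exactly `d` under
iteration of the automorphism `Φ`. -/
def GrowsPolyDeg {α : Type*} [DecidableEq α] (Φ : MulAut (FreeGroup α))
    (x : FreeGroup α) (d : ℕ) : Prop :=
  PolyBounded (fun k => cyclLength ((Φ ^ k) x)) d ∧
  ∀ d' < d, ¬ PolyBounded (fun k => cyclLength ((Φ ^ k) x)) d'

/-- The conjugacy class of `x` grows exponentially under iteration of `Φ`. -/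
def GrowsExp {α : Type*} [DecidableEq α] (Φ : MulAut (FreeGroup α))
    (x : FreeGroup α) : Prop :=
  1 < Filter.liminf
    (fun k : ℕ => (cyclLength ((Φ ^ k) x) : ℝ) ^ ((1 : ℝ) / (k : ℝ))) Filter.atTop

section Aux

variable {α : Type*} [DecidableEq α]

lemma cyclSet_nonempty (x : FreeGroup α) :
    ((fun y : FreeGroup α => y.toWord.length) '' {y | IsConj x y}).Nonempty :=
  ⟨x.toWord.length, x, IsConj.refl x, rfl⟩

lemma cyclLength_le {x y : FreeGroup α} (h : IsConj x y) :
    cyclLength x ≤ y.toWord.length :=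
  Nat.sInf_le ⟨y, h, rfl⟩

lemma exists_cycl_rep (x : FreeGroup α) :
    ∃ y : FreeGroup α, IsConj x y ∧ y.toWord.length = cyclLength x := by
  have := Nat.sInf_mem (cyclSet_nonempty x)
  obtain ⟨y, hy, hlen⟩ := this
  exact ⟨y, hy, hlen⟩

/-- Word-level Lipschitz bound for an automorphism. -/
lemma norm_map_le [Finite α] (Φ : MulAut (FreeGroup α)) :
    ∃ L : ℕ, 1 ≤ L ∧ ∀ z : FreeGroup α,
      (Φ z).toWord.length ≤ L * z.toWord.length := by
  have : Fintype α := Fintype.ofFinite α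
  refine ⟨1 + Finset.univ.sup (fun a => FreeGroup.norm (Φ (FreeGroup.of a))),
    Nat.le_add_right 1 _, ?_⟩
  set L := 1 + Finset.univ.sup (fun a => FreeGroup.norm (Φ (FreeGroup.of a))) with hL
  have hgen : ∀ a : α, FreeGroup.norm (Φ (FreeGroup.of a)) ≤ L := by
    intro a
    have h1 : FreeGroup.norm (Φ (FreeGroup.of a)) ≤
        Finset.univ.sup (fun a => FreeGroup.norm (Φ (FreeGroup.of a))) :=
      Finset.le_sup (f := fun a => FreeGroup.norm (Φ (FreeGroup.of a))) (Finset.mem_univ a)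
    omega
  have key : ∀ l : List (α × Bool),
      FreeGroup.norm (Φ (FreeGroup.mk l)) ≤ L * l.length := by
    intro l
    induction l with
    | nil =>
        simp [show FreeGroup.mk ([] : List (α × Bool)) = 1 from rfl]
    | cons p l ih =>
        have hsplit : FreeGroup.mk (p :: l) = FreeGroup.mk [p] * FreeGroup.mk l := by
          rw [FreeGroup.mul_mk]; rfl
        have h1 : FreeGroup.norm (Φ (FreeGroup.mk [p])) ≤ L := by
          rcases p with ⟨a, b⟩
          cases b
          · have : FreeGroup.mk [(a, false)] = (FreeGroup.of a)⁻¹ := by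
              rw [show FreeGroup.of a = FreeGroup.mk [(a, true)] from rfl,
                FreeGroup.inv_mk]; rfl
            rw [this, map_inv, FreeGroup.norm_inv_eq]
            exact hgen a
          · exact hgen a
        calc FreeGroup.norm (Φ (FreeGroup.mk (p :: l)))
            ≤ FreeGroup.norm (Φ (FreeGroup.mk [p])) +
              FreeGroup.norm (Φ (FreeGroup.mk l)) := by
              rw [hsplit, map_mul]; exact FreeGroup.norm_mul_le _ _
          _ ≤ L + L * l.length := Nat.add_le_add h1 ih
          _ = L * (p :: l).length := by
              simp [List.length_cons, Nat.mul_add, Nat.mul_one, Nat.add_comm]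
  intro z
  have := key z.toWord
  rwa [FreeGroup.mk_toWord] at this

/-- `cyclLength` is Lipschitz under an automorphism. -/
lemma cyclLength_lip [Finite α] (Φ : MulAut (FreeGroup α)) :
    ∃ L : ℕ, 1 ≤ L ∧ ∀ z : FreeGroup α,
      cyclLength (Φ z) ≤ L * cyclLength z := by
  obtain ⟨L, hL1, hL⟩ := norm_map_le Φ
  refine ⟨L, hL1, fun z => ?_⟩
  obtain ⟨y, hy, hlen⟩ := exists_cycl_rep z
  have hconj : IsConj (Φ z) (Φ y) := Φ.toMonoidHom.map_isConj hy
  calc cyclLength (Φ z) ≤ (Φ y).toWord.length := cyclLength_le hconj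
    _ ≤ L * y.toWord.length := hL y
    _ = L * cyclLength z := by rw [hlen]

end Aux

/-- If the conjugacy class of `x` grows polynomially of degree `d` under
`φ`-iteration, then for every `n ≥ 1` it grows polynomially of degree `d` under
`φⁿ`-iteration. -/
theorem stmt2 {α : Type*} [DecidableEq α] [Finite α] (Φ : MulAut (FreeGroup α))
    (x : FreeGroup α) (d : ℕ) (h : GrowsPolyDeg Φ x d) :
    ∀ n : ℕ, 1 ≤ n → GrowsPolyDeg (Φ ^ n) x d := by
  intro n hn
  set a : ℕ → ℕ := fun k => cyclLength ((Φ ^ k) x) with ha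
  have hsub : ∀ k : ℕ, cyclLength (((Φ ^ n) ^ k) x) = a (n * k) := by
    intro k; rw [← pow_mul]
  obtain ⟨L, hL1, hLip⟩ := cyclLength_lip Φ
  -- Lipschitz step for the sequence a
  have hstep : ∀ m : ℕ, a (m + 1) ≤ L * a m := by
    intro m
    have : (Φ ^ (m + 1)) x = Φ ((Φ ^ m) x) := by
      rw [pow_succ', MulAut.mul_apply]
    simp only [ha, this]
    exact hLip _
  have hiter : ∀ m r : ℕ, a (m + r) ≤ L ^ r * a m := by
    intro m r
    induction r with
    | zero => simp
    | succ r ih =>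
        calc a (m + (r + 1)) = a ((m + r) + 1) := by ring_nf
          _ ≤ L * a (m + r) := hstep _
          _ ≤ L * (L ^ r * a m) := Nat.mul_le_mul_left _ ih
          _ = L ^ (r + 1) * a m := by ring
  constructor
  · -- upper bound
    obtain ⟨C, hC⟩ := h.1
    have hC0 : 0 ≤ C := by
      have := hC 0
      simp at this
      exact le_trans (Nat.cast_nonneg _) this
    refine ⟨C * (n : ℝ) ^ d, fun k => ?_⟩
    simp only [hsub]
    calc (a (n * k) : ℝ) ≤ C * ((n * k : ℕ) + 1 : ℝ) ^ d := hC (n * k)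
      _ ≤ C * ((n : ℝ) * ((k : ℝ) + 1)) ^ d := by
          apply mul_le_mul_of_nonneg_left _ hC0
          apply pow_le_pow_left₀ (by positivity)
          push_cast
          nlinarith [(Nat.one_le_cast.mpr hn : (1:ℝ) ≤ n), (Nat.cast_nonneg k : (0:ℝ) ≤ k)]
      _ = C * (n : ℝ) ^ d * ((k : ℝ) + 1) ^ d := by rw [mul_pow]; ring
  · -- no smaller degree
    intro d' hd' hbad
    apply h.2 d' hd'
    obtain ⟨C', hC'⟩ := hbad
    have hC'0 : 0 ≤ C' := by
      have := hC' 0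
      simp [hsub] at this
      exact le_trans (Nat.cast_nonneg _) this
    refine ⟨(L : ℝ) ^ n * C', fun j => ?_⟩
    have hkey : a j ≤ L ^ n * a (n * (j / n)) := by
      have hdecomp : n * (j / n) + j % n = j := Nat.div_add_mod j n
      have h1 : a j ≤ L ^ (j % n) * a (n * (j / n)) := by
        conv_lhs => rw [← hdecomp]
        exact hiter _ _
      have h2 : L ^ (j % n) ≤ L ^ n :=
        Nat.pow_le_pow_right hL1 (le_of_lt (Nat.mod_lt _ hn))
      exact le_trans h1 (Nat.mul_le_mul_right _ h2)
    have hb := hC' (j / n)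
    simp only [hsub] at hb
    simp only [ha]
    have hcast : (a j : ℝ) ≤ (L : ℝ) ^ n * (a (n * (j / n)) : ℝ) := by
      exact_mod_cast Nat.cast_le.mpr hkey
    calc (a j : ℝ) ≤ (L : ℝ) ^ n * (a (n * (j / n)) : ℝ) := hcast
      _ ≤ (L : ℝ) ^ n * (C' * ((j / n : ℕ) + 1 : ℝ) ^ d') := by
          apply mul_le_mul_of_nonneg_left hb (by positivity)
      _ ≤ (L : ℝ) ^ n * (C' * ((j : ℝ) + 1) ^ d') := by
          apply mul_le_mul_of_nonneg_left _ (by positivity)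
          apply mul_le_mul_of_nonneg_left _ hC'0
          apply pow_le_pow_left₀ (by positivity)
          have : (j / n : ℕ) ≤ j := Nat.div_le_self j n
          push_cast
          linarith [(Nat.cast_le.mpr this : ((j/n : ℕ):ℝ) ≤ (j:ℝ))]
      _ = (L : ℝ) ^ n * C' * ((j : ℝ) + 1) ^ d' := by ring
end

section
/- In a free-by-cyclic group G = F ⋊_Φ ℤ, every slender subgroup is isomorphic to the trivial group, ℤ, or a semidirect product ℤ ⋊ ℤ. -/
/-!
Let `K = H ∩ F`. Every subgroup of `K` is finitely generated, and `K` is free by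
Nielsen–Schreier, so `K` has rank at most one: a free group on two distinct letters `x, y` maps
to the wreath product `ℤ ≀ ℤ = ℤ[ℤ] ⋊ ℤ` by `x ↦ t`, `y ↦ δ₀`, and this sends the subgroup
generated by the conjugates `xⁿ y x⁻ⁿ` onto the base `ℤ[ℤ]`, which is not finitely generated.
Hence `K` is trivial or infinite cyclic. It is the kernel of the projection `H → ℤ`, whose image
is trivial or infinite cyclic; in the latter case the projection splits and `H ≅ K ⋊ ℤ`.
-/

open Finsupp SemidirectProduct Multiplicative

/-- A group is slender if every subgroup of it is finitely generated.  Here slenderness of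
a subgroup `H` is expressed by: every subgroup contained in `H` is finitely generated. -/
def SlenderSubgroup {G : Type*} [Group G] (H : Subgroup G) : Prop :=
  ∀ K : Subgroup G, K ≤ H → K.FG

def IsSlender (G : Type*) [Group G] : Prop :=
  ∀ K : Subgroup G, K.FG

section FG

variable {A B : Type*} [Group A] [Group B]

theorem Subgroup.FG.map {L : Subgroup A} (h : L.FG) (f : A →* B) : (L.map f).FG := by
  rw [Subgroup.fg_iff_submonoid_fg] at h ⊢
  exact h.map f

theorem Subgroup.FG.map_injective {L : Subgroup A} (f : A →* B) (hf : Function.Injective f)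
    (h : (L.map f).FG) : L.FG := by
  rw [Subgroup.fg_iff_submonoid_fg] at h ⊢
  exact h.map_injective f hf

theorem IsSlender.of_injective (hB : IsSlender B) (f : A →* B) (hf : Function.Injective f) :
    IsSlender A :=
  fun _ ↦ (hB _).map_injective f hf

theorem SlenderSubgroup.isSlender {H : Subgroup A} (hH : SlenderSubgroup H) : IsSlender H :=
  fun L ↦ (hH _ (Subgroup.map_subtype_le L)).map_injective _ H.subtype_injective

theorem MonoidHom.subgroupComap_injective_of_injective {f : A →* B} (hf : Function.Injective f)
    (H : Subgroup B) : Function.Injective (f.subgroupComap H) :=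
  fun _ _ h ↦ Subtype.ext (hf (congrArg Subtype.val h))

end FG

namespace Finsupp

variable {Γ : Type*}

theorem closure_range_ofAdd_single_one :
    Subgroup.closure (Set.range fun g : Γ ↦ ofAdd (single g (1 : ℤ))) = ⊤ := by
  have h := AddSubgroup.toSubgroup_closure (Set.range (Finsupp.basisSingleOne (R := ℤ) (ι := Γ)))
  rw [← Submodule.span_int_eq_addSubgroupClosure, Module.Basis.span_eq, coe_basisSingleOne,
    Submodule.top_toAddSubgroup, map_top] at h
  rw [h]
  congr 1

theorem not_groupFG_multiplicative [Infinite Γ] : ¬ Group.FG (Multiplicative (Γ →₀ ℤ)) := by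
  rw [← AddGroup.fg_iff_mul_fg, ← Module.Finite.iff_addGroup_fg]
  intro
  have := Module.Finite.finite_basis (Finsupp.basisSingleOne (R := ℤ) (ι := Γ))
  exact not_finite Γ

variable (Γ) [Group Γ]

/-- `Multiplicative (Γ →₀ ℤ) ⋊[translateMulAut Γ] Γ` is the wreath product `ℤ ≀ Γ`. -/
noncomputable def translateMulAut : Γ →* MulAut (Multiplicative (Γ →₀ ℤ)) :=
  letI := comapDistribMulAction (α := Γ) (M := ℤ) (G := Γ)
  (MulAutMultiplicative (Γ →₀ ℤ)).symm.toMonoidHom.comp (DistribMulAction.toAddAut Γ (Γ →₀ ℤ))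

variable {Γ}

theorem translateMulAut_single (g h : Γ) (k : ℤ) :
    translateMulAut Γ g (ofAdd (single h k)) = ofAdd (single (g * h) k) :=
  congrArg ofAdd mapDomain_single

end Finsupp

theorem FreeGroup.not_isSlender {α : Type*} [Nontrivial α] : ¬ IsSlender (FreeGroup α) := by
  classical
  obtain ⟨x, y, hxy⟩ := exists_pair_ne α
  let f : FreeGroup α →*
      Multiplicative (Multiplicative ℤ →₀ ℤ) ⋊[translateMulAut _] Multiplicative ℤ :=
    FreeGroup.lift fun i ↦
      if i = x then inr (ofAdd 1) else if i = y then inl (ofAdd (single 1 1)) else 1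
  have hf (n : ℤ) : f (of x ^ n * of y * (of x ^ n)⁻¹) = inl (ofAdd (single (ofAdd n) 1)) := by
    have hx : f (of x) = inr (ofAdd 1) := by simp [f]
    have hy : f (of y) = inl (ofAdd (single 1 1)) := by simp [f, hxy.symm]
    rw [_root_.map_mul, _root_.map_mul, _root_.map_inv, _root_.map_zpow, hx, hy,
      ← _root_.map_zpow, ← _root_.map_inv, ← inl_aut, translateMulAut_single, mul_one,
      ← ofAdd_zsmul, zsmul_one, Int.cast_id]
  have hmap : (Subgroup.closure (Set.range fun n : ℤ ↦ of x ^ n * of y * (of x ^ n)⁻¹)).map f =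
      (⊤ : Subgroup _).map inl := by
    rw [MonoidHom.map_closure, ← closure_range_ofAdd_single_one, MonoidHom.map_closure,
      ← Set.range_comp, ← Set.range_comp]
    congr 1
    ext
    simp [hf]
  intro h
  exact not_groupFG_multiplicative <|
    Group.fg_def.2 ((hmap ▸ (h _).map f).map_injective _ inl_injective)

theorem IsFreeGroup.subsingleton_or_nonempty_mulEquiv_int {Q : Type*} [Group Q] [IsFreeGroup Q]
    (hQ : IsSlender Q) : Subsingleton Q ∨ Nonempty (Q ≃* Multiplicative ℤ) := by
  let e := IsFreeGroup.toFreeGroup Q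
  have : Subsingleton (IsFreeGroup.Generators Q) := by
    by_contra h
    rw [not_subsingleton_iff_nontrivial] at h
    exact FreeGroup.not_isSlender (hQ.of_injective e.symm.toMonoidHom e.symm.injective)
  rcases isEmpty_or_nonempty (IsFreeGroup.Generators Q) with _ | ⟨⟨g⟩⟩
  · exact .inl e.toEquiv.subsingleton
  · have := uniqueOfSubsingleton g
    exact .inr ⟨e.trans FreeGroup.mulEquivIntOfUnique⟩

section Extension

variable {A : Type*} [Group A]

theorem MonoidHom.exists_surjective_ker_eq (p : A →* Multiplicative ℤ) (hp : p ≠ 1) :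
    ∃ q : A →* Multiplicative ℤ, Function.Surjective q ∧ q.ker = p.ker := by
  obtain ⟨a, ha⟩ := DFunLike.ne_iff.1 hp
  have : Infinite p.range := Infinite.of_injective (p.rangeRestrict a ^ · : ℤ → p.range)
    (injective_zpow_iff_not_isOfFinOrder.2 (not_isOfFinOrder_of_isMulTorsionFree
      (by simpa [← Subtype.val_inj] using ha)))
  refine ⟨intCyclicMulEquiv.symm.toMonoidHom.comp p.rangeRestrict,
    intCyclicMulEquiv.symm.surjective.comp p.rangeRestrict_surjective, ?_⟩
  rw [MonoidHom.ker_comp_of_injective _ _ (MulEquiv.injective _), MonoidHom.ker_rangeRestrict]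

theorem MonoidHom.exists_mulEquiv_semidirectProduct_ker (q : A →* Multiplicative ℤ)
    (hq : Function.Surjective q) :
    ∃ ψ : Multiplicative ℤ →* MulAut q.ker, Nonempty (A ≃* q.ker ⋊[ψ] Multiplicative ℤ) := by
  obtain ⟨a, ha⟩ := hq (ofAdd 1)
  let S : GroupExtension q.ker A (Multiplicative ℤ) :=
    ⟨q.ker.subtype, q, q.ker.subtype_injective, q.ker.range_subtype, hq⟩
  let s : S.Splitting := ⟨zpowersHom A a, fun n ↦ by simp [S, ha, ← ofAdd_zsmul]⟩
  exact ⟨s.conjAct, ⟨s.semidirectProductMulEquiv.symm⟩⟩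

theorem MonoidHom.subsingleton_or_mulEquiv_int_or_semidirectProduct_of_ker
    (p : A →* Multiplicative ℤ)
    (hker : Subsingleton p.ker ∨ Nonempty (p.ker ≃* Multiplicative ℤ)) :
    Subsingleton A ∨ Nonempty (A ≃* Multiplicative ℤ) ∨
      ∃ ψ : Multiplicative ℤ →* MulAut (Multiplicative ℤ),
        Nonempty (A ≃* Multiplicative ℤ ⋊[ψ] Multiplicative ℤ) := by
  by_cases hp : p = 1
  · have e : A ≃* p.ker := Subgroup.topEquiv.symm.trans (.subgroupCongr (by simp [hp]))
    rcases hker with _ | ⟨⟨e'⟩⟩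
    · exact .inl e.toEquiv.subsingleton
    · exact .inr (.inl ⟨e.trans e'⟩)
  obtain ⟨q, hq, hqp⟩ := p.exists_surjective_ker_eq hp
  rw [← hqp] at hker
  rcases hker with _ | ⟨⟨e'⟩⟩
  · exact .inr (.inl ⟨.ofBijective q ⟨q.ker_eq_bot_iff.1 (Subgroup.eq_bot_of_subsingleton _), hq⟩⟩)
  · obtain ⟨ψ, ⟨e⟩⟩ := q.exists_mulEquiv_semidirectProduct_ker hq
    exact .inr (.inr ⟨_, ⟨e.trans (SemidirectProduct.congr' e' (.refl _))⟩⟩)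

end Extension

noncomputable def SemidirectProduct.comapInlMulEquivKer {N G : Type*} [Group N] [Group G]
    {φ : G →* MulAut N} (H : Subgroup (N ⋊[φ] G)) :
    H.comap inl ≃* (rightHom.comp H.subtype).ker :=
  (MonoidHom.ofInjective (inl.subgroupComap_injective_of_injective inl_injective H)).trans
    (.subgroupCongr (by
      ext x
      refine ⟨?_, fun h ↦ ?_⟩
      · rintro ⟨n, rfl⟩
        exact right_inl (φ := φ) n.1
      · have hx : inl x.1.left = x.1 := SemidirectProduct.ext rfl (MonoidHom.mem_ker.1 h).symm
        exact ⟨⟨x.1.left, hx ▸ x.2⟩, Subtype.ext hx⟩))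

theorem stmt7_general {α : Type*}
    (Φ : Multiplicative ℤ →* MulAut (FreeGroup α))
    (H : Subgroup (FreeGroup α ⋊[Φ] Multiplicative ℤ))
    (hH : SlenderSubgroup H) :
    H = ⊥ ∨ Nonempty (H ≃* Multiplicative ℤ) ∨
      ∃ ψ : Multiplicative ℤ →* MulAut (Multiplicative ℤ),
        Nonempty (H ≃* Multiplicative ℤ ⋊[ψ] Multiplicative ℤ) := by
  let e := SemidirectProduct.comapInlMulEquivKer H
  have hK := IsFreeGroup.subsingleton_or_nonempty_mulEquiv_int
    (hH.isSlender.of_injective _ (inl.subgroupComap_injective_of_injective inl_injective H))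
  have hker := hK.imp e.toEquiv.subsingleton_congr.1 (Nonempty.map (e.symm.trans ·))
  rcases MonoidHom.subsingleton_or_mulEquiv_int_or_semidirectProduct_of_ker _ hker with _ | h
  · exact .inl (Subgroup.eq_bot_of_subsingleton H)
  · exact .inr h

/-- In a free-by-cyclic group `G = F ⋊_Φ ℤ` with `F` finitely generated free,
every slender subgroup is isomorphic to the trivial group, to `ℤ`, or to a semidirect
product `ℤ ⋊ ℤ`. -/
theorem stmt7 {α : Type*} [Finite α]
    (Φ : Multiplicative ℤ →* MulAut (FreeGroup α))
    (H : Subgroup (FreeGroup α ⋊[Φ] Multiplicative ℤ))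
    (hH : SlenderSubgroup H) :
    H = ⊥ ∨ Nonempty (H ≃* Multiplicative ℤ) ∨
      ∃ ψ : Multiplicative ℤ →* MulAut (Multiplicative ℤ),
        Nonempty (H ≃* Multiplicative ℤ ⋊[ψ] Multiplicative ℤ) :=
  stmt7_general Φ H hH
end

section
/- Let F' ≤ F be a finite index subgroup with Φᵏ(F') = F' and set Ψ = Φᵏ|_{F'}. If Ψ is polynomially growing on F' then Φᵏ is polynomially growing on F: for every x ∈ F there is m ≥ 1 with xᵐ ∈ F', and the polynomial growth of the F'-conjugacy class of xᵐ under Ψ implies polynomial growth of the F-conjugacy class of x under Φᵏ, of the same degree. -/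
/-- The cyclically reduced length of `x` relative to conjugation by elements of the
subgroup `H` only: the minimal word length in the `H`-conjugacy class of `x`. -/
noncomputable def cyclLengthIn {α : Type*} [DecidableEq α]
    (H : Subgroup (FreeGroup α)) (x : FreeGroup α) : ℕ :=
  sInf ((fun y : FreeGroup α => y.toWord.length) '' {y | ∃ h ∈ H, h * x * h⁻¹ = y})

/-- The `H`-conjugacy class of `x` grows polynomially of degree exactly `d` under
iteration of `Ψ` (where `Ψ` preserves `H`). -/
def GrowsPolyDegIn {α : Type*} [DecidableEq α] (H : Subgroup (FreeGroup α))
    (Ψ : MulAut (FreeGroup α)) (x : FreeGroup α) (d : ℕ) : Prop :=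
  PolyBounded (fun k => cyclLengthIn H ((Ψ ^ k) x)) d ∧
  ∀ d' < d, ¬ PolyBounded (fun k => cyclLengthIn H ((Ψ ^ k) x)) d'

theorem Nat.le_of_forall_pos_mul_le_mul_add {b b' K : ℕ}
    (h : ∀ n, 0 < n → n * b ≤ n * b' + K) : b ≤ b' := by
  by_contra! hlt
  have := h (K + 1) K.succ_pos
  nlinarith

theorem PolyBounded.of_le_mul_add {a b : ℕ → ℕ} {d m C : ℕ}
    (hab : ∀ j, a j ≤ m * b j + C) (hb : PolyBounded b d) : PolyBounded a d := by
  obtain ⟨B, hB⟩ := hb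
  refine ⟨m * B + C, fun j => ?_⟩
  have hpow : (1 : ℝ) ≤ ((j : ℝ) + 1) ^ d := one_le_pow₀ (by linarith [j.cast_nonneg (α := ℝ)])
  calc (a j : ℝ) ≤ m * b j + C := by exact_mod_cast hab j
    _ ≤ m * (B * ((j : ℝ) + 1) ^ d) + C * ((j : ℝ) + 1) ^ d := by
        gcongr
        · exact hB j
        · exact le_mul_of_one_le_right C.cast_nonneg hpow
    _ = (m * B + C) * ((j : ℝ) + 1) ^ d := by ring

theorem polyBounded_iff_of_le_of_le_mul_add {a b : ℕ → ℕ} {d m C : ℕ}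
    (hab : ∀ j, a j ≤ b j) (hba : ∀ j, b j ≤ m * a j + C) :
    PolyBounded a d ↔ PolyBounded b d :=
  ⟨.of_le_mul_add hba, .of_le_mul_add (m := 1) (C := 0) (by simpa using hab)⟩

theorem Subgroup.exists_le_and_inv_mul_mem {G : Type*} [Group G] (H : Subgroup G)
    [H.FiniteIndex] (f : G → ℕ) : ∃ C, ∀ g : G, ∃ r, f r ≤ C ∧ r⁻¹ * g ∈ H := by
  obtain ⟨C, hC⟩ := Finite.bddAbove_range fun q : G ⧸ H => f q.out
  refine ⟨C, fun g => ?_⟩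
  obtain ⟨h, hh⟩ := QuotientGroup.mk_out_eq_mul H g
  refine ⟨(g : G ⧸ H).out, hC ⟨_, rfl⟩, ?_⟩
  rw [hh, mul_inv_rev, inv_mul_cancel_right]
  exact inv_mem h.2

namespace FreeGroup

open reduceCyclically

variable {α : Type*} [DecidableEq α]

def translationLength (x : FreeGroup α) : ℕ :=
  (reduceCyclically x.toWord).length

theorem norm_pow_of_ne_zero (x : FreeGroup α) {n : ℕ} (hn : n ≠ 0) :
    norm (x ^ n) = 2 * (conjugator x.toWord).length + n * translationLength x := by
  rw [norm, toWord_pow, reduce_flatten_replicate isReduced_toWord, if_neg hn]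
  simp [translationLength]
  ring

theorem mul_translationLength_le_norm_pow (x : FreeGroup α) (n : ℕ) :
    n * translationLength x ≤ norm (x ^ n) := by
  rcases eq_or_ne n 0 with rfl | hn
  · simp
  · rw [norm_pow_of_ne_zero x hn]; omega

theorem norm_pow_le (x : FreeGroup α) (n : ℕ) :
    norm (x ^ n) ≤ 2 * (conjugator x.toWord).length + n * translationLength x := by
  rcases eq_or_ne n 0 with rfl | hn
  · simp
  · rw [norm_pow_of_ne_zero x hn]

theorem translationLength_le_norm (x : FreeGroup α) : translationLength x ≤ norm x := by
  simpa using mul_translationLength_le_norm_pow x 1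

theorem norm_conj_le (g x : FreeGroup α) : norm (g * x * g⁻¹) ≤ norm x + 2 * norm g := by
  have := (norm_mul_le (g * x) g⁻¹).trans (Nat.add_le_add_right (norm_mul_le g x) _)
  rw [norm_inv_eq] at this
  omega

theorem translationLength_conj_le (g x : FreeGroup α) :
    translationLength (g * x * g⁻¹) ≤ translationLength x := by
  refine Nat.le_of_forall_pos_mul_le_mul_add (K := 2 * norm g + 2 * (conjugator x.toWord).length)
    fun n _ => ?_
  calc n * translationLength (g * x * g⁻¹)
      ≤ norm (g * x ^ n * g⁻¹) := conj_pow (a := g) ▸ mul_translationLength_le_norm_pow _ n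
    _ ≤ norm (x ^ n) + 2 * norm g := norm_conj_le g _
    _ ≤ _ := by linarith [norm_pow_le x n]

theorem IsConj.translationLength_eq {x y : FreeGroup α} (h : IsConj x y) :
    translationLength x = translationLength y := by
  obtain ⟨g, rfl⟩ := isConj_iff.1 h
  refine le_antisymm ?_ (translationLength_conj_le g x)
  simpa [mul_assoc] using translationLength_conj_le g⁻¹ (g * x * g⁻¹)

theorem translationLength_pow (x : FreeGroup α) (m : ℕ) :
    translationLength (x ^ m) = m * translationLength x := by
  apply le_antisymm
  · refine Nat.le_of_forall_pos_mul_le_mul_add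
      (K := 2 * (conjugator x.toWord).length) fun n _ => ?_
    calc n * translationLength (x ^ m) ≤ norm ((x ^ m) ^ n) :=
          mul_translationLength_le_norm_pow _ n
      _ = norm (x ^ (m * n)) := by rw [pow_mul]
      _ ≤ _ := (norm_pow_le x _).trans_eq (by ring)
  · refine Nat.le_of_forall_pos_mul_le_mul_add
      (K := 2 * (conjugator (x ^ m).toWord).length) fun n _ => ?_
    calc n * (m * translationLength x) = (m * n) * translationLength x := by ring
      _ ≤ norm (x ^ (m * n)) := mul_translationLength_le_norm_pow _ _
      _ = norm ((x ^ m) ^ n) := by rw [pow_mul]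
      _ ≤ _ := (norm_pow_le _ n).trans_eq (by ring)

theorem norm_mk_reduceCyclically (x : FreeGroup α) :
    norm (mk (reduceCyclically x.toWord)) = translationLength x := by
  rw [norm, toWord_mk, (isCyclicallyReduced isReduced_toWord).isReduced.reduce_eq,
    translationLength]

theorem isConj_mk_reduceCyclically (x : FreeGroup α) :
    IsConj x (mk (reduceCyclically x.toWord)) := by
  refine (isConj_iff.2 ⟨mk (conjugator x.toWord), ?_⟩).symm
  rw [inv_mk, mul_mk, mul_mk, conj_conjugator_reduceCyclically, mk_toWord]

end FreeGroup

open FreeGroup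

section CyclicLength

variable {α : Type*} [DecidableEq α]

theorem cyclLength_eq_translationLength (x : FreeGroup α) :
    cyclLength x = translationLength x := by
  refine le_antisymm ?_ (le_csInf ⟨_, x, IsConj.refl x, rfl⟩ ?_)
  · exact Nat.sInf_le ⟨_, isConj_mk_reduceCyclically x, norm_mk_reduceCyclically x⟩
  · rintro _ ⟨y, hy, rfl⟩
    exact hy.translationLength_eq.trans_le (translationLength_le_norm y)

theorem cyclLength_pow (x : FreeGroup α) (m : ℕ) : cyclLength (x ^ m) = m * cyclLength x := by
  simp only [cyclLength_eq_translationLength, translationLength_pow]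

theorem cyclLengthIn_le_norm_conj (H : Subgroup (FreeGroup α)) {h : FreeGroup α} (hh : h ∈ H)
    (x : FreeGroup α) : cyclLengthIn H x ≤ norm (h * x * h⁻¹) :=
  Nat.sInf_le ⟨_, ⟨h, hh, rfl⟩, rfl⟩

theorem cyclLength_le_cyclLengthIn (H : Subgroup (FreeGroup α)) (x : FreeGroup α) :
    cyclLength x ≤ cyclLengthIn H x := by
  refine le_csInf ⟨_, x, ⟨1, H.one_mem, by group⟩, rfl⟩ ?_
  rintro _ ⟨y, ⟨h, -, rfl⟩, rfl⟩
  exact Nat.sInf_le ⟨_, isConj_iff.2 ⟨h, rfl⟩, rfl⟩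

theorem exists_cyclLengthIn_le_cyclLength_add (H : Subgroup (FreeGroup α)) [H.FiniteIndex] :
    ∃ C, ∀ x, cyclLengthIn H x ≤ cyclLength x + C := by
  obtain ⟨C, hC⟩ := H.exists_le_and_inv_mul_mem norm
  refine ⟨2 * C, fun x => ?_⟩
  obtain ⟨c, hc⟩ := isConj_iff.1 (isConj_mk_reduceCyclically x)
  obtain ⟨r, hr, hrc⟩ := hC c
  set y := mk (reduceCyclically x.toWord)
  calc cyclLengthIn H x ≤ norm ((r⁻¹ * c) * x * (r⁻¹ * c)⁻¹) := cyclLengthIn_le_norm_conj H hrc x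
    _ = norm (r⁻¹ * y * r⁻¹⁻¹) := by rw [← hc]; group
    _ ≤ norm y + 2 * norm r⁻¹ := norm_conj_le _ _
    _ ≤ cyclLength x + 2 * C := by
        rw [norm_mk_reduceCyclically, ← cyclLength_eq_translationLength, norm_inv_eq]; omega

theorem polyBounded_cyclLength_iff_cyclLengthIn_pow (H : Subgroup (FreeGroup α))
    [H.FiniteIndex] (Ψ : MulAut (FreeGroup α)) (x : FreeGroup α) {m : ℕ} (hm : 0 < m) (d : ℕ) :
    PolyBounded (fun j => cyclLength ((Ψ ^ j) x)) d ↔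
      PolyBounded (fun j => cyclLengthIn H ((Ψ ^ j) (x ^ m))) d := by
  obtain ⟨C, hC⟩ := exists_cyclLengthIn_le_cyclLength_add H
  refine polyBounded_iff_of_le_of_le_mul_add (m := m) (C := C) (fun j => ?_) (fun j => ?_)
  · calc cyclLength ((Ψ ^ j) x) ≤ cyclLength ((Ψ ^ j) (x ^ m)) := by
          rw [map_pow, cyclLength_pow]; exact Nat.le_mul_of_pos_left _ hm
      _ ≤ _ := cyclLength_le_cyclLengthIn H _
  · simpa only [map_pow, cyclLength_pow] using hC ((Ψ ^ j) (x ^ m))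

theorem growsPolyDeg_iff_growsPolyDegIn_pow (H : Subgroup (FreeGroup α)) [H.FiniteIndex]
    (Ψ : MulAut (FreeGroup α)) (x : FreeGroup α) {m : ℕ} (hm : 0 < m) (d : ℕ) :
    GrowsPolyDeg Ψ x d ↔ GrowsPolyDegIn H Ψ (x ^ m) d := by
  simp only [GrowsPolyDeg, GrowsPolyDegIn, polyBounded_cyclLength_iff_cyclLengthIn_pow H Ψ x hm]

end CyclicLength

theorem stmt11_general {α : Type*} [DecidableEq α]
    (F' : Subgroup (FreeGroup α)) (hF' : F'.FiniteIndex)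
    (Φ : MulAut (FreeGroup α)) (k : ℕ)
    (hΨ : ∀ x ∈ F', ∃ d : ℕ,
      PolyBounded (fun j => cyclLengthIn F' (((Φ ^ k) ^ j) x)) d) :
    (∀ x : FreeGroup α, ∃ d : ℕ,
      PolyBounded (fun j => cyclLength (((Φ ^ k) ^ j) x)) d) ∧
    ∀ x : FreeGroup α, ∃ m : ℕ, 1 ≤ m ∧ x ^ m ∈ F' ∧
      ∀ d : ℕ, GrowsPolyDegIn F' (Φ ^ k) (x ^ m) d → GrowsPolyDeg (Φ ^ k) x d := by
  refine ⟨fun x => ?_, fun x => ?_⟩ <;>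
    obtain ⟨m, hm, -, hxm⟩ := F'.exists_pow_mem_of_index_ne_zero hF'.index_ne_zero x
  · obtain ⟨d, hd⟩ := hΨ _ hxm
    exact ⟨d, (polyBounded_cyclLength_iff_cyclLengthIn_pow F' (Φ ^ k) x hm d).2 hd⟩
  · exact ⟨m, hm, hxm, fun d => (growsPolyDeg_iff_growsPolyDegIn_pow F' (Φ ^ k) x hm d).2⟩

/-- Let `F' ≤ F` be a finite index subgroup of the finitely generated free
group `F` with `Φᵏ(F') = F'` (`k ≥ 1`), and let `Ψ = Φᵏ` restricted to `F'`.  If `Ψ` is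
polynomially growing on `F'` (every `F'`-conjugacy class of an element of `F'` grows
polynomially under `Ψ`-iteration), then `Φᵏ` is polynomially growing on `F`: every
`x ∈ F` has a positive power `xᵐ ∈ F'`, and polynomial growth of degree `d` of the
`F'`-class of `xᵐ` under `Ψ` implies polynomial growth of degree `d` of the `F`-class of
`x` under `Φᵏ`. -/
theorem stmt11 {α : Type*} [DecidableEq α] [Finite α]
    (F' : Subgroup (FreeGroup α)) (hF' : F'.FiniteIndex)
    (Φ : MulAut (FreeGroup α)) (k : ℕ) (hk : 1 ≤ k)
    (hfix : F'.map (Φ ^ k : MulAut (FreeGroup α)).toMonoidHom = F')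
    (hΨ : ∀ x ∈ F', ∃ d : ℕ,
      PolyBounded (fun j => cyclLengthIn F' (((Φ ^ k) ^ j) x)) d) :
    (∀ x : FreeGroup α, ∃ d : ℕ,
      PolyBounded (fun j => cyclLength (((Φ ^ k) ^ j) x)) d) ∧
    ∀ x : FreeGroup α, ∃ m : ℕ, 1 ≤ m ∧ x ^ m ∈ F' ∧
      ∀ d : ℕ, GrowsPolyDegIn F' (Φ ^ k) (x ^ m) d → GrowsPolyDeg (Φ ^ k) x d :=
  stmt11_general F' hF' Φ k hΨ
end

section
/- Let G = F ⋊_Φ ℤ and suppose the conjugacy class of c ∈ F (c ≠ 1) is φ-periodic, i.e. Φⁿ(c) = x c^{±1} x⁻¹ for some n ≥ 1 and x ∈ F. Then G contains a subgroup isomorphic to ℤ ⋊ ℤ (in particular containing ⟨c⟩ with infinite index over it), namely ⟨c, x⁻¹tⁿ⟩ ≅ ℤ ⋊ ℤ (which is ℤ² if the sign is +). -/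
/-!
Since `Φⁿ(c) = x c^{±1} x⁻¹`, the element `s = x⁻¹ tⁿ` conjugates `c` to `c^{±1}`, so
`(a, b) ↦ c^a s^b` is a homomorphism from `ℤ ⋊ ℤ` onto `⟨c, s⟩`. It is injective: projecting
to `ℤ` kills `c` and sends `s` to `n ≠ 0`, and `c` has infinite order because free groups are
torsion-free.
-/

open Multiplicative Subgroup

namespace SemidirectProduct

variable {N G H : Type*} [Group N] [Group G] [Group H] {φ : G →* MulAut N}

lemma conj_inl_mul_inr_inl (x : N) (g : G) (c : N) :
    MulAut.conj (inl x * inr g : N ⋊[φ] G) (inl c) = inl (x * φ g c * x⁻¹) := by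
  rw [MulAut.conj_apply, map_mul, map_mul, map_inv, inl_aut, map_inv]
  group

variable {fn : N →* H} {fg : G →* H}
  (h : ∀ g, fn.comp (φ g).toMonoidHom = (MulAut.conj (fg g)).toMonoidHom.comp fn)

lemma range_lift : (lift fn fg h).range = fn.range ⊔ fg.range := by
  apply le_antisymm
  · rintro _ ⟨p, rfl⟩
    exact mul_mem (mem_sup_left ⟨p.left, rfl⟩) (mem_sup_right ⟨p.right, rfl⟩)
  · refine sup_le ?_ ?_
    · rintro _ ⟨n, rfl⟩
      exact ⟨inl n, lift_inl fn fg h n⟩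
    · rintro _ ⟨g, rfl⟩
      exact ⟨inr g, lift_inr fn fg h g⟩

lemma lift_injective (hfn : Function.Injective fn) (hfg : ∀ n g, fn n * fg g = 1 → g = 1) :
    Function.Injective (lift fn fg h) := by
  refine (injective_iff_map_eq_one _).2 fun p hp => ?_
  have hright : p.right = 1 := hfg _ _ hp
  have hleft : p.left = 1 := by
    apply (injective_iff_map_eq_one fn).1 hfn
    simpa [lift, hright] using hp
  exact SemidirectProduct.ext hleft hright

end SemidirectProduct

lemma MulAut.zpow_apply_eq_zpow_units {G : Type*} [Group G] {f : MulAut G} {c : G} {u : ℤˣ}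
    (h : f c = c ^ (u : ℤ)) (k : ℤ) : (f ^ k) c = c ^ ((u ^ k : ℤˣ) : ℤ) := by
  have hinv : f⁻¹ c = c ^ ((u⁻¹ : ℤˣ) : ℤ) := by
    rw [MulAut.inv_apply, MulEquiv.symm_apply_eq, map_zpow, h, ← zpow_mul, ← Units.val_mul,
      mul_inv_cancel, Units.val_one, zpow_one]
  induction k using Int.induction_on with
  | zero => simp
  | succ k ih =>
    rw [zpow_add_one, MulAut.mul_apply, h, map_zpow, ih, ← zpow_mul, zpow_add_one, Units.val_mul]
  | pred k ih =>
    rw [zpow_sub_one, MulAut.mul_apply, hinv, map_zpow, ih, ← zpow_mul, zpow_sub_one,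
      Units.val_mul]

/-- The action of `ℤ` on `ℤ` in which `b` acts by multiplication by `ε ^ b`. -/
def signAction (ε : ℤˣ) : Multiplicative ℤ →* MulAut (Multiplicative ℤ) :=
  (MulAutMultiplicative ℤ).symm.toMonoidHom.comp
    ((DistribMulAction.toAddAut ℤˣ ℤ).comp (zpowersHom ℤˣ ε))

lemma signAction_apply (ε : ℤˣ) (b a : Multiplicative ℤ) :
    signAction ε b a = a ^ ((ε ^ toAdd b : ℤˣ) : ℤ) := by
  change ofAdd (((ε ^ toAdd b : ℤˣ) : ℤ) * toAdd a) = _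
  rw [← ofAdd_toAdd a, ← ofAdd_zsmul, smul_eq_mul, toAdd_ofAdd]

noncomputable def Subgroup.closurePairMulEquivSemidirectProduct {G : Type*} [Group G]
    {C S : G} {ε : ℤˣ}
    (hconj : MulAut.conj S C = C ^ (ε : ℤ)) (hC : ∀ m : ℤ, C ^ m = 1 → m = 0)
    (hCS : ∀ a b : ℤ, C ^ a * S ^ b = 1 → b = 0) :
    closure {C, S} ≃* Multiplicative ℤ ⋊[signAction ε] Multiplicative ℤ := by
  have hcompat : ∀ g, (zpowersHom G C).comp (signAction ε g).toMonoidHom =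
      (MulAut.conj (zpowersHom G S g)).toMonoidHom.comp (zpowersHom G C) := fun g => by
    refine MonoidHom.ext_mint ?_
    simp [signAction_apply, MulAut.zpow_apply_eq_zpow_units hconj]
  let f := SemidirectProduct.lift _ _ hcompat
  have hinj : Function.Injective f := by
    refine SemidirectProduct.lift_injective hcompat ?_ fun a b hab => ?_
    · exact (injective_iff_map_eq_one _).2 fun a ha => toAdd.injective (hC _ ha)
    · exact toAdd.injective (hCS _ _ hab)
  have hrange : f.range = closure {C, S} := by
    rw [SemidirectProduct.range_lift, range_zpowersHom, range_zpowersHom, zpowers_eq_closure,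
      zpowers_eq_closure, ← Subgroup.closure_union, Set.singleton_union]
  exact ((MonoidHom.ofInjective hinj).trans (MulEquiv.subgroupCongr hrange)).symm

theorem stmt17_general {α : Type*}
    (Φ : Multiplicative ℤ →* MulAut (FreeGroup α))
    (c x : FreeGroup α) (hc : c ≠ 1) (n : ℕ) (hn : 1 ≤ n)
    (hper : Φ (Multiplicative.ofAdd (n : ℤ)) c = x * c * x⁻¹ ∨
            Φ (Multiplicative.ofAdd (n : ℤ)) c = x * c⁻¹ * x⁻¹) :
    (SemidirectProduct.inl (φ := Φ) c ∈
        Subgroup.closure {SemidirectProduct.inl (φ := Φ) c,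
          (SemidirectProduct.inl (φ := Φ) x)⁻¹ *
            SemidirectProduct.inr (φ := Φ) (Multiplicative.ofAdd (n : ℤ))}) ∧
    ∃ ψ : Multiplicative ℤ →* MulAut (Multiplicative ℤ),
      Nonempty ((Subgroup.closure {SemidirectProduct.inl (φ := Φ) c,
          (SemidirectProduct.inl (φ := Φ) x)⁻¹ *
            SemidirectProduct.inr (φ := Φ) (Multiplicative.ofAdd (n : ℤ))} :
            Subgroup (FreeGroup α ⋊[Φ] Multiplicative ℤ)) ≃*
        Multiplicative ℤ ⋊[ψ] Multiplicative ℤ) := by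
  set C := SemidirectProduct.inl (φ := Φ) c
  set S := (SemidirectProduct.inl (φ := Φ) x)⁻¹ * SemidirectProduct.inr (ofAdd (n : ℤ))
  refine ⟨subset_closure (Set.mem_insert _ _), ?_⟩
  obtain ⟨ε, hε⟩ : ∃ ε : ℤˣ, Φ (ofAdd (n : ℤ)) c = x * c ^ (ε : ℤ) * x⁻¹ := by
    rcases hper with h | h
    · exact ⟨1, by simpa using h⟩
    · exact ⟨-1, by simpa using h⟩
  have hconj : MulAut.conj S C = C ^ (ε : ℤ) := by
    simp only [S, C]
    rw [← map_inv, SemidirectProduct.conj_inl_mul_inr_inl, hε, ← map_zpow]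
    group
  have hC : ∀ m : ℤ, C ^ m = 1 → m = 0 := fun m hm => by
    rw [← map_zpow, map_eq_one_iff _ SemidirectProduct.inl_injective] at hm
    exact (IsMulTorsionFree.zpow_eq_one_iff_right hc).1 hm
  have hCS : ∀ a b : ℤ, C ^ a * S ^ b = 1 → b = 0 := fun a b hab => by
    have h := congrArg SemidirectProduct.rightHom hab
    simp only [C, S, map_mul, map_zpow, map_inv, map_one, SemidirectProduct.rightHom_inl,
      SemidirectProduct.rightHom_inr, one_zpow, inv_one, one_mul] at h
    rw [← ofAdd_zsmul, ofAdd_eq_one, smul_eq_mul, mul_eq_zero] at h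
    omega
  exact ⟨signAction ε, ⟨closurePairMulEquivSemidirectProduct hconj hC hCS⟩⟩

/-- Let `G = F ⋊_Φ ℤ` and suppose the conjugacy class of a nontrivial
`c ∈ F` is `φ`-periodic: `Φⁿ(c) = x c^{±1} x⁻¹` for some `n ≥ 1` and `x ∈ F`.  Then the
subgroup `⟨c, x⁻¹ tⁿ⟩` of `G` contains `c` and is isomorphic to `ℤ ⋊ ℤ`
(a semidirect product of two infinite cyclic groups). -/
theorem stmt17 {α : Type*} [Finite α]
    (Φ : Multiplicative ℤ →* MulAut (FreeGroup α))
    (c x : FreeGroup α) (hc : c ≠ 1) (n : ℕ) (hn : 1 ≤ n)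
    (hper : Φ (Multiplicative.ofAdd (n : ℤ)) c = x * c * x⁻¹ ∨
            Φ (Multiplicative.ofAdd (n : ℤ)) c = x * c⁻¹ * x⁻¹) :
    (SemidirectProduct.inl (φ := Φ) c ∈
        Subgroup.closure {SemidirectProduct.inl (φ := Φ) c,
          (SemidirectProduct.inl (φ := Φ) x)⁻¹ *
            SemidirectProduct.inr (φ := Φ) (Multiplicative.ofAdd (n : ℤ))}) ∧
    ∃ ψ : Multiplicative ℤ →* MulAut (Multiplicative ℤ),
      Nonempty ((Subgroup.closure {SemidirectProduct.inl (φ := Φ) c,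
          (SemidirectProduct.inl (φ := Φ) x)⁻¹ *
            SemidirectProduct.inr (φ := Φ) (Multiplicative.ofAdd (n : ℤ))} :
            Subgroup (FreeGroup α ⋊[Φ] Multiplicative ℤ)) ≃*
        Multiplicative ℤ ⋊[ψ] Multiplicative ℤ) :=
  stmt17_general Φ c x hc n hn hper
end
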